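/- arXiv:2207.07093 — 2 statements merged into one kernel-verified Lean document; each statement's English description precedes it below -/
import Mathlib

section
/- The real polynomial p(t) = 8813625t⁶ + 16982610t⁵ + 2262441955t⁴ + 464971196t³ - 2293725941t² - 291034182t + 429774609 has exactly four real roots α₁ < α₂ < α₃ < α₄, and they satisfy α₁ < -3/4 < α₂ < 0 < α₃ < 1/2 < α₄ < 1. -/
/-- The dehomogenized discriminant polynomial of the quadric surface bundle in the
proof of Theorem 1.3(1). -/
def stmt7Poly (t : ℝ) : ℝ :=
  8813625 * t ^ 6 + 16982610 * t ^ 5 + 2262441955 * t ^ 4 + 464971196 * t ^ 3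
    - 2293725941 * t ^ 2 - 291034182 * t + 429774609

/-- Derivative of `stmt7Poly`. -/
def dP (t : ℝ) : ℝ :=
  52881750 * t ^ 5 + 84913050 * t ^ 4 + 9049767820 * t ^ 3 + 1394913588 * t ^ 2
    - 4587451882 * t - 291034182

lemma tailL : ∀ t : ℝ, t ≤ (-1 : ℝ) → 0 < stmt7Poly t := by
  intro t ht
  have hs : (0:ℝ) ≤ (-1 - t) := by linarith
  have key : stmt7Poly t = 216384624 + 3326405232 * ((-1 - t)) + 9848390476 * ((-1 - t) ^ 2) + 8591243024 * ((-1 - t) ^ 3) + 2309733280 * ((-1 - t) ^ 4) + 35899140 * ((-1 - t) ^ 5) + 8813625 * ((-1 - t) ^ 6) := by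
    unfold stmt7Poly; ring
  have h2 : (0:ℝ) ≤ (-1 - t) ^ 2 := pow_nonneg hs 2
  have h3 : (0:ℝ) ≤ (-1 - t) ^ 3 := pow_nonneg hs 3
  have h4 : (0:ℝ) ≤ (-1 - t) ^ 4 := pow_nonneg hs 4
  have h5 : (0:ℝ) ≤ (-1 - t) ^ 5 := pow_nonneg hs 5
  have h6 : (0:ℝ) ≤ (-1 - t) ^ 6 := pow_nonneg hs 6
  linarith

lemma tailR : ∀ t : ℝ, (1 : ℝ) ≤ t → 0 < stmt7Poly t := by
  intro t ht
  have hs : (0:ℝ) ≤ (t - 1) := by linarith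
  have key : stmt7Poly t = 598223872 + 5703990144 * ((t - 1)) + 12977869852 * ((t - 1) ^ 2) + 9860837616 * ((t - 1) ^ 3) + 2479559380 * ((t - 1) ^ 4) + 69864360 * ((t - 1) ^ 5) + 8813625 * ((t - 1) ^ 6) := by
    unfold stmt7Poly; ring
  have h2 : (0:ℝ) ≤ (t - 1) ^ 2 := pow_nonneg hs 2
  have h3 : (0:ℝ) ≤ (t - 1) ^ 3 := pow_nonneg hs 3
  have h4 : (0:ℝ) ≤ (t - 1) ^ 4 := pow_nonneg hs 4
  have h5 : (0:ℝ) ≤ (t - 1) ^ 5 := pow_nonneg hs 5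
  have h6 : (0:ℝ) ≤ (t - 1) ^ 6 := pow_nonneg hs 6
  linarith

lemma derivNeg1 : ∀ t : ℝ, ((-1 : ℝ)) ≤ t → t ≤ ((-4/5 : ℝ)) → dP t < 0 := by
  intro t hA hB
  have hu : (0:ℝ) ≤ t - ((-1 : ℝ)) := by linarith
  have hv : (0:ℝ) ≤ ((-4/5 : ℝ)) - t := by linarith
  have key : -dP t = 8608925262/25 + 9318900692250 * ((((-4/5 : ℝ)) - t) ^ 5) + 34284015366250 * ((t - ((-1 : ℝ))) * (((-4/5 : ℝ)) - t) ^ 4) + 47168770676500 * ((t - ((-1 : ℝ))) ^ 2 * (((-4/5 : ℝ)) - t) ^ 3) + 28760253426500 * ((t - ((-1 : ℝ))) ^ 3 * (((-4/5 : ℝ)) - t) ^ 2) + 6556650305750 * ((t - ((-1 : ℝ))) ^ 4 * (((-4/5 : ℝ)) - t)) := by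
    unfold dP; ring
  have h0 : (0:ℝ) ≤ (((-4/5 : ℝ)) - t) ^ 5 := pow_nonneg hv 5
  have h1 : (0:ℝ) ≤ (t - ((-1 : ℝ))) * (((-4/5 : ℝ)) - t) ^ 4 := mul_nonneg hu (pow_nonneg hv 4)
  have h2 : (0:ℝ) ≤ (t - ((-1 : ℝ))) ^ 2 * (((-4/5 : ℝ)) - t) ^ 3 := mul_nonneg (pow_nonneg hu 2) (pow_nonneg hv 3)
  have h3 : (0:ℝ) ≤ (t - ((-1 : ℝ))) ^ 3 * (((-4/5 : ℝ)) - t) ^ 2 := mul_nonneg (pow_nonneg hu 3) (pow_nonneg hv 2)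
  have h4 : (0:ℝ) ≤ (t - ((-1 : ℝ))) ^ 4 * (((-4/5 : ℝ)) - t) := mul_nonneg (pow_nonneg hu 4) hv
  linarith

lemma valNeg1 : ∀ t : ℝ, ((-4/5 : ℝ)) ≤ t → t ≤ ((-7/10 : ℝ)) → stmt7Poly t < 0 := by
  intro t hA hB
  have hu : (0:ℝ) ≤ t - ((-4/5 : ℝ)) := by linarith
  have hv : (0:ℝ) ≤ ((-7/10 : ℝ)) - t := by linarith
  have key : -stmt7Poly t = 4340693384703/40000 + 11488763339225 * ((((-7/10 : ℝ)) - t) ^ 6) + 103368281083350 * ((t - ((-4/5 : ℝ))) * (((-7/10 : ℝ)) - t) ^ 5) + 292056752882375 * ((t - ((-4/5 : ℝ))) ^ 2 * (((-7/10 : ℝ)) - t) ^ 4) + 371075873356500 * ((t - ((-4/5 : ℝ))) ^ 3 * (((-7/10 : ℝ)) - t) ^ 3) + 222010551288875 * ((t - ((-4/5 : ℝ))) ^ 4 * (((-7/10 : ℝ)) - t) ^ 2) + 51111921884250 * ((t - ((-4/5 : ℝ))) ^ 5 * (((-7/10 : ℝ)) - t)) := by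
    unfold stmt7Poly; ring
  have h0 : (0:ℝ) ≤ (((-7/10 : ℝ)) - t) ^ 6 := pow_nonneg hv 6
  have h1 : (0:ℝ) ≤ (t - ((-4/5 : ℝ))) * (((-7/10 : ℝ)) - t) ^ 5 := mul_nonneg hu (pow_nonneg hv 5)
  have h2 : (0:ℝ) ≤ (t - ((-4/5 : ℝ))) ^ 2 * (((-7/10 : ℝ)) - t) ^ 4 := mul_nonneg (pow_nonneg hu 2) (pow_nonneg hv 4)
  have h3 : (0:ℝ) ≤ (t - ((-4/5 : ℝ))) ^ 3 * (((-7/10 : ℝ)) - t) ^ 3 := mul_nonneg (pow_nonneg hu 3) (pow_nonneg hv 3)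
  have h4 : (0:ℝ) ≤ (t - ((-4/5 : ℝ))) ^ 4 * (((-7/10 : ℝ)) - t) ^ 2 := mul_nonneg (pow_nonneg hu 4) (pow_nonneg hv 2)
  have h5 : (0:ℝ) ≤ (t - ((-4/5 : ℝ))) ^ 5 * (((-7/10 : ℝ)) - t) := mul_nonneg (pow_nonneg hu 5) hv
  linarith

lemma derivPos1 : ∀ t : ℝ, ((-7/10 : ℝ)) ≤ t → t ≤ ((-1/10 : ℝ)) → 0 < dP t := by
  intro t hA hB
  have hu : (0:ℝ) ≤ t - ((-7/10 : ℝ)) := by linarith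
  have hv : (0:ℝ) ≤ ((-1/10 : ℝ)) - t := by linarith
  have key : dP t = 69047334699/400 + (2820840684125/648) * ((((-1/10 : ℝ)) - t) ^ 5) + (5956657694125/81) * ((t - ((-7/10 : ℝ))) * (((-1/10 : ℝ)) - t) ^ 4) + (18296770460375/108) * ((t - ((-7/10 : ℝ))) ^ 2 * (((-1/10 : ℝ)) - t) ^ 3) + (10994842893625/81) * ((t - ((-7/10 : ℝ))) ^ 3 * (((-1/10 : ℝ)) - t) ^ 2) + (22976273881625/648) * ((t - ((-7/10 : ℝ))) ^ 4 * (((-1/10 : ℝ)) - t)) := by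
    unfold dP; ring
  have h0 : (0:ℝ) ≤ (((-1/10 : ℝ)) - t) ^ 5 := pow_nonneg hv 5
  have h1 : (0:ℝ) ≤ (t - ((-7/10 : ℝ))) * (((-1/10 : ℝ)) - t) ^ 4 := mul_nonneg hu (pow_nonneg hv 4)
  have h2 : (0:ℝ) ≤ (t - ((-7/10 : ℝ))) ^ 2 * (((-1/10 : ℝ)) - t) ^ 3 := mul_nonneg (pow_nonneg hu 2) (pow_nonneg hv 3)
  have h3 : (0:ℝ) ≤ (t - ((-7/10 : ℝ))) ^ 3 * (((-1/10 : ℝ)) - t) ^ 2 := mul_nonneg (pow_nonneg hu 3) (pow_nonneg hv 2)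
  have h4 : (0:ℝ) ≤ (t - ((-7/10 : ℝ))) ^ 4 * (((-1/10 : ℝ)) - t) := mul_nonneg (pow_nonneg hu 4) hv
  linarith

lemma valPos1 : ∀ t : ℝ, ((-1/10 : ℝ)) ≤ t → t ≤ 0 → 0 < stmt7Poly t := by
  intro t hA hB
  have hu : (0:ℝ) ≤ t - ((-1/10 : ℝ)) := by linarith
  have hv : (0:ℝ) ≤ -t := by linarith
  have key : stmt7Poly t = 429774609 + 5927270777025 * ((-t) ^ 6) + 52825458336900 * ((t - ((-1/10 : ℝ))) * (-t) ^ 5) + 152241956147500 * ((t - ((-1/10 : ℝ))) ^ 2 * (-t) ^ 4) + 198820173164000 * ((t - ((-1/10 : ℝ))) ^ 3 * (-t) ^ 3) + 122579831590000 * ((t - ((-1/10 : ℝ))) ^ 4 * (-t) ^ 2) + 29103418200000 * ((t - ((-1/10 : ℝ))) ^ 5 * (-t)) := by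
    unfold stmt7Poly; ring
  have h0 : (0:ℝ) ≤ (-t) ^ 6 := pow_nonneg hv 6
  have h1 : (0:ℝ) ≤ (t - ((-1/10 : ℝ))) * (-t) ^ 5 := mul_nonneg hu (pow_nonneg hv 5)
  have h2 : (0:ℝ) ≤ (t - ((-1/10 : ℝ))) ^ 2 * (-t) ^ 4 := mul_nonneg (pow_nonneg hu 2) (pow_nonneg hv 4)
  have h3 : (0:ℝ) ≤ (t - ((-1/10 : ℝ))) ^ 3 * (-t) ^ 3 := mul_nonneg (pow_nonneg hu 3) (pow_nonneg hv 3)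
  have h4 : (0:ℝ) ≤ (t - ((-1/10 : ℝ))) ^ 4 * (-t) ^ 2 := mul_nonneg (pow_nonneg hu 4) (pow_nonneg hv 2)
  have h5 : (0:ℝ) ≤ (t - ((-1/10 : ℝ))) ^ 5 * (-t) := mul_nonneg (pow_nonneg hu 5) hv
  linarith

lemma derivNeg2 : ∀ t : ℝ, 0 ≤ t → t ≤ (3/5) → dP t < 0 := by
  intro t hA hB
  have hu : (0:ℝ) ≤ t := by linarith
  have hv : (0:ℝ) ≤ (3/5) - t := by linarith
  have key : -dP t = 291034182 + (2867157426250/81) * (t * ((3/5) - t) ^ 4) + (10945537109500/81) * (t ^ 2 * ((3/5) - t) ^ 3) + (4532489670500/27) * (t ^ 3 * ((3/5) - t) ^ 2) + (5815493137750/81) * (t ^ 4 * ((3/5) - t)) + (292120387750/81) * (t ^ 5) := by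
    unfold dP; ring
  have h1 : (0:ℝ) ≤ t * ((3/5) - t) ^ 4 := mul_nonneg hu (pow_nonneg hv 4)
  have h2 : (0:ℝ) ≤ t ^ 2 * ((3/5) - t) ^ 3 := mul_nonneg (pow_nonneg hu 2) (pow_nonneg hv 3)
  have h3 : (0:ℝ) ≤ t ^ 3 * ((3/5) - t) ^ 2 := mul_nonneg (pow_nonneg hu 3) (pow_nonneg hv 2)
  have h4 : (0:ℝ) ≤ t ^ 4 * ((3/5) - t) := mul_nonneg (pow_nonneg hu 4) hv
  have h5 : (0:ℝ) ≤ t ^ 5 := pow_nonneg hu 5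
  linarith

lemma valNeg2 : ∀ t : ℝ, (3/5) ≤ t → t ≤ (7/10) → stmt7Poly t < 0 := by
  intro t hA hB
  have hu : (0:ℝ) ≤ t - (3/5) := by linarith
  have hv : (0:ℝ) ≤ (7/10) - t := by linarith
  have key : -stmt7Poly t = 109505754384/625 + 57146975424000 * ((t - (3/5)) * ((7/10) - t) ^ 5) + 250895747528000 * ((t - (3/5)) ^ 2 * ((7/10) - t) ^ 4) + 426119191728000 * ((t - (3/5)) ^ 3 * ((7/10) - t) ^ 3) + 344216745920000 * ((t - (3/5)) ^ 4 * ((7/10) - t) ^ 2) + 127923542531400 * ((t - (3/5)) ^ 5 * ((7/10) - t)) + 16077207421775 * ((t - (3/5)) ^ 6) := by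
    unfold stmt7Poly; ring
  have h1 : (0:ℝ) ≤ (t - (3/5)) * ((7/10) - t) ^ 5 := mul_nonneg hu (pow_nonneg hv 5)
  have h2 : (0:ℝ) ≤ (t - (3/5)) ^ 2 * ((7/10) - t) ^ 4 := mul_nonneg (pow_nonneg hu 2) (pow_nonneg hv 4)
  have h3 : (0:ℝ) ≤ (t - (3/5)) ^ 3 * ((7/10) - t) ^ 3 := mul_nonneg (pow_nonneg hu 3) (pow_nonneg hv 3)
  have h4 : (0:ℝ) ≤ (t - (3/5)) ^ 4 * ((7/10) - t) ^ 2 := mul_nonneg (pow_nonneg hu 4) (pow_nonneg hv 2)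
  have h5 : (0:ℝ) ≤ (t - (3/5)) ^ 5 * ((7/10) - t) := mul_nonneg (pow_nonneg hu 5) hv
  have h6 : (0:ℝ) ≤ (t - (3/5)) ^ 6 := pow_nonneg hu 6
  linarith

lemma derivPos2 : ∀ t : ℝ, (7/10) ≤ t → t ≤ 1 → 0 < dP t := by
  intro t hA hB
  have hu : (0:ℝ) ≤ t - (7/10) := by linarith
  have hv : (0:ℝ) ≤ 1 - t := by linarith
  have key : dP t = 125841192003/400 + (108485710820750/81) * ((t - (7/10)) * (1 - t) ^ 4) + (496434207621500/81) * ((t - (7/10)) ^ 2 * (1 - t) ^ 3) + (282326779460500/27) * ((t - (7/10)) ^ 3 * (1 - t) ^ 2) + (638673796958750/81) * ((t - (7/10)) ^ 4 * (1 - t)) + (179646238799750/81) * ((t - (7/10)) ^ 5) := by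
    unfold dP; ring
  have h1 : (0:ℝ) ≤ (t - (7/10)) * (1 - t) ^ 4 := mul_nonneg hu (pow_nonneg hv 4)
  have h2 : (0:ℝ) ≤ (t - (7/10)) ^ 2 * (1 - t) ^ 3 := mul_nonneg (pow_nonneg hu 2) (pow_nonneg hv 3)
  have h3 : (0:ℝ) ≤ (t - (7/10)) ^ 3 * (1 - t) ^ 2 := mul_nonneg (pow_nonneg hu 3) (pow_nonneg hv 2)
  have h4 : (0:ℝ) ≤ (t - (7/10)) ^ 4 * (1 - t) := mul_nonneg (pow_nonneg hu 4) hv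
  have h5 : (0:ℝ) ≤ (t - (7/10)) ^ 5 := pow_nonneg hu 5
  linarith

lemma hasDerivP (x : ℝ) : HasDerivAt stmt7Poly (dP x) x := by
  have h : HasDerivAt (fun t : ℝ =>
      8813625 * t ^ 6 + 16982610 * t ^ 5 + 2262441955 * t ^ 4 + 464971196 * t ^ 3
        - 2293725941 * t ^ 2 - 291034182 * t + 429774609)
      (8813625 * (6 * x ^ 5) + 16982610 * (5 * x ^ 4) + 2262441955 * (4 * x ^ 3)
        + 464971196 * (3 * x ^ 2) - 2293725941 * (2 * x ^ 1) - 291034182 * 1 + 0) x := by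
    exact ((((((((hasDerivAt_pow 6 x).const_mul (8813625 : ℝ)).add
      ((hasDerivAt_pow 5 x).const_mul (16982610 : ℝ))).add
      ((hasDerivAt_pow 4 x).const_mul (2262441955 : ℝ))).add
      ((hasDerivAt_pow 3 x).const_mul (464971196 : ℝ))).sub
      ((hasDerivAt_pow 2 x).const_mul (2293725941 : ℝ))).sub
      ((hasDerivAt_id x).const_mul (291034182 : ℝ))).add (hasDerivAt_const x (429774609 : ℝ)))
  have : stmt7Poly = fun t : ℝ =>
      8813625 * t ^ 6 + 16982610 * t ^ 5 + 2262441955 * t ^ 4 + 464971196 * t ^ 3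
        - 2293725941 * t ^ 2 - 291034182 * t + 429774609 := rfl
  rw [this]
  convert h using 1
  unfold dP; ring

lemma contP : Continuous stmt7Poly := by
  unfold stmt7Poly; continuity

lemma antiOn (a b : ℝ) (h : ∀ t : ℝ, a ≤ t → t ≤ b → dP t < 0) :
    StrictAntiOn stmt7Poly (Set.Icc a b) := by
  apply strictAntiOn_of_deriv_neg (convex_Icc a b) (contP.continuousOn)
  intro x hx
  rw [interior_Icc] at hx
  rw [(hasDerivP x).deriv]
  exact h x hx.1.le hx.2.le

lemma monoOn (a b : ℝ) (h : ∀ t : ℝ, a ≤ t → t ≤ b → 0 < dP t) :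
    StrictMonoOn stmt7Poly (Set.Icc a b) := by
  apply strictMonoOn_of_deriv_pos (convex_Icc a b) (contP.continuousOn)
  intro x hx
  rw [interior_Icc] at hx
  rw [(hasDerivP x).deriv]
  exact h x hx.1.le hx.2.le

/-- `stmt7Poly` has exactly four real roots `α₁ < α₂ < α₃ < α₄`, and they satisfy
`α₁ < -3/4 < α₂ < 0 < α₃ < 1/2 < α₄ < 1`. -/
theorem stmt7 :
    ∃ α₁ α₂ α₃ α₄ : ℝ,
      α₁ < -3 / 4 ∧ -3 / 4 < α₂ ∧ α₂ < 0 ∧ 0 < α₃ ∧ α₃ < 1 / 2 ∧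
      1 / 2 < α₄ ∧ α₄ < 1 ∧
      (∀ t : ℝ, stmt7Poly t = 0 ↔ t = α₁ ∨ t = α₂ ∨ t = α₃ ∨ t = α₄) := by
  have A1 := antiOn (-1) (-4/5) (derivNeg1)
  have M2 := monoOn (-7/10) (-1/10) (derivPos1)
  have A3 := antiOn 0 (3/5) (derivNeg2)
  have M4 := monoOn (7/10) 1 (derivPos2)
  -- values at cut points
  have v1 : (0:ℝ) < stmt7Poly (-1) := tailL _ le_rfl
  have v2 : stmt7Poly (-4/5) < 0 := valNeg1 _ le_rfl (by norm_num)
  have v3 : stmt7Poly (-7/10) < 0 := valNeg1 _ (by norm_num) le_rfl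
  have v4 : (0:ℝ) < stmt7Poly (-1/10) := valPos1 _ le_rfl (by norm_num)
  have v5 : (0:ℝ) < stmt7Poly 0 := valPos1 _ (by norm_num) le_rfl
  have v6 : stmt7Poly (1/2 : ℝ) < 0 := by unfold stmt7Poly; norm_num
  have v7 : stmt7Poly (7/10 : ℝ) < 0 := valNeg2 _ (by norm_num) le_rfl
  have v8 : (0:ℝ) < stmt7Poly 1 := tailR _ le_rfl
  -- roots via IVT
  obtain ⟨α₁, hα₁m, hα₁⟩ : ∃ x ∈ Set.Ioo (-1 : ℝ) (-4/5), stmt7Poly x = 0 := by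
    have := intermediate_value_Ioo' (by norm_num : (-1:ℝ) ≤ -4/5) contP.continuousOn
      (by constructor <;> assumption : (0:ℝ) ∈ Set.Ioo (stmt7Poly (-4/5)) (stmt7Poly (-1)))
    obtain ⟨x, hx, hfx⟩ := this
    exact ⟨x, hx, hfx⟩
  obtain ⟨α₂, hα₂m, hα₂⟩ : ∃ x ∈ Set.Ioo (-7/10 : ℝ) (-1/10), stmt7Poly x = 0 := by
    have := intermediate_value_Ioo (by norm_num : (-7/10:ℝ) ≤ -1/10) contP.continuousOn
      (by constructor <;> assumption : (0:ℝ) ∈ Set.Ioo (stmt7Poly (-7/10)) (stmt7Poly (-1/10)))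
    obtain ⟨x, hx, hfx⟩ := this
    exact ⟨x, hx, hfx⟩
  obtain ⟨α₃, hα₃m, hα₃⟩ : ∃ x ∈ Set.Ioo (0 : ℝ) (1/2), stmt7Poly x = 0 := by
    have := intermediate_value_Ioo' (by norm_num : (0:ℝ) ≤ 1/2) contP.continuousOn
      (by constructor <;> assumption : (0:ℝ) ∈ Set.Ioo (stmt7Poly (1/2)) (stmt7Poly 0))
    obtain ⟨x, hx, hfx⟩ := this
    exact ⟨x, hx, hfx⟩
  obtain ⟨α₄, hα₄m, hα₄⟩ : ∃ x ∈ Set.Ioo (7/10 : ℝ) 1, stmt7Poly x = 0 := by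
    have := intermediate_value_Ioo (by norm_num : (7/10:ℝ) ≤ 1) contP.continuousOn
      (by constructor <;> assumption : (0:ℝ) ∈ Set.Ioo (stmt7Poly (7/10)) (stmt7Poly 1))
    obtain ⟨x, hx, hfx⟩ := this
    exact ⟨x, hx, hfx⟩
  obtain ⟨l1, r1⟩ := hα₁m
  obtain ⟨l2, r2⟩ := hα₂m
  obtain ⟨l3, r3⟩ := hα₃m
  obtain ⟨l4, r4⟩ := hα₄m
  refine ⟨α₁, α₂, α₃, α₄, by linarith, by linarith, by linarith, l3, r3,
    by linarith, r4, ?_⟩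
  intro t
  constructor
  · intro ht
    rcases le_or_gt t (-1) with h1 | h1
    · exact absurd ht (ne_of_gt (tailL t h1))
    rcases le_or_gt t (-4/5) with h2 | h2
    · left
      exact A1.injOn ⟨h1.le, h2⟩ ⟨l1.le, r1.le⟩ (by rw [ht, hα₁])
    rcases le_or_gt t (-7/10) with h3 | h3
    · exact absurd ht (ne_of_lt (valNeg1 t h2.le h3))
    rcases le_or_gt t (-1/10) with h4 | h4
    · right; left
      exact M2.injOn ⟨h3.le, h4⟩ ⟨l2.le, r2.le⟩ (by rw [ht, hα₂])
    rcases le_or_gt t 0 with h5 | h5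
    · exact absurd ht (ne_of_gt (valPos1 t h4.le h5))
    rcases le_or_gt t (3/5) with h6 | h6
    · right; right; left
      exact A3.injOn ⟨h5.le, h6⟩ ⟨l3.le, by linarith⟩ (by rw [ht, hα₃])
    rcases le_or_gt t (7/10) with h7 | h7
    · exact absurd ht (ne_of_lt (valNeg2 t h6.le h7))
    rcases le_or_gt t 1 with h8 | h8
    · right; right; right
      exact M4.injOn ⟨h7.le, h8⟩ ⟨l4.le, r4.le⟩ (by rw [ht, hα₄])
    · exact absurd ht (ne_of_gt (tailR t h8.le))
  · rintro (rfl | rfl | rfl | rfl) <;> assumption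
end

section
/- The polynomial p(t) = 17464t⁶ - 288576t⁵ + 7502108t⁴ - 53765156t³ + 1128363667t² + 54275974t - 1133336585 over ℝ has exactly two real roots α₁, α₂, and they satisfy α₁ < 0 < α₂ < 2. -/
/-- The dehomogenized discriminant polynomial of the quadric surface bundle in
Example 1.5. -/
def stmt18Poly (t : ℝ) : ℝ :=
  17464 * t ^ 6 - 288576 * t ^ 5 + 7502108 * t ^ 4 - 53765156 * t ^ 3
    + 1128363667 * t ^ 2 + 54275974 * t - 1133336585

/-!
The second derivative of `stmt18Poly` is a quartic with no real zeros, so the polynomial is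
strictly convex and has at most two real zeros. Its values at `-1, 0, 1` are positive, negative,
positive, which places one zero in `(-1, 0)` and one in `(0, 1)`.
-/

open Set

theorem StrictConvexOn.eq_or_eq_of_apply_eq_zero {s : Set ℝ} {f : ℝ → ℝ}
    (hf : StrictConvexOn ℝ s f) {a b t : ℝ} (ha : a ∈ s) (hb : b ∈ s) (ht : t ∈ s) (hab : a < b)
    (hfa : f a = 0) (hfb : f b = 0) (hft : f t = 0) : t = a ∨ t = b := by
  have middle_ne_zero : ∀ {x y z}, x ∈ s → z ∈ s → x < y → y < z → f x = 0 → f z = 0 →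
      f y ≠ 0 := fun hx hz hxy hyz hfx hfz => by
    have := hf.lt_on_openSegment hx hz (hxy.trans hyz).ne (Ioo_subset_openSegment ⟨hxy, hyz⟩)
    rw [hfx, hfz, max_self] at this
    exact this.ne
  by_contra! hne
  rcases lt_trichotomy t a with hta | rfl | hat
  · exact middle_ne_zero ht hb hta hab hft hfb hfa
  · exact hne.1 rfl
  rcases lt_trichotomy t b with htb | rfl | hbt
  · exact middle_ne_zero ha hb hat htb hfa hfb hft
  · exact hne.2 rfl
  · exact middle_ne_zero ha ht hab hbt hfa hft hfb

theorem continuous_stmt18Poly : Continuous stmt18Poly := by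
  unfold stmt18Poly; fun_prop

theorem iterate_deriv_two_stmt18Poly (t : ℝ) :
    deriv^[2] stmt18Poly t = 523920 * t ^ 4 - 5771520 * t ^ 3 + 90025296 * t ^ 2
      - 322590936 * t + 2256727334 := by
  have deriv_stmt18Poly : deriv stmt18Poly = fun t => 104784 * t ^ 5 - 1442880 * t ^ 4
      + 30008432 * t ^ 3 - 161295468 * t ^ 2 + 2256727334 * t + 54275974 := by
    ext t
    unfold stmt18Poly
    simp (disch := fun_prop) only [deriv_fun_sub, deriv_fun_add, deriv_fun_mul,
      deriv_const', deriv_fun_pow, deriv_id'', deriv_const_mul_id']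
    ring
  simp (disch := fun_prop) only [Function.iterate_succ, Function.iterate_zero,
    Function.comp_apply, id_eq, deriv_stmt18Poly, deriv_add_const', deriv_fun_add, deriv_fun_sub,
    deriv_fun_mul, deriv_const', deriv_fun_pow, deriv_id'', deriv_const_mul_id']
  ring

theorem strictConvexOn_stmt18Poly : StrictConvexOn ℝ univ stmt18Poly :=
  strictConvexOn_univ_of_deriv2_pos continuous_stmt18Poly fun x => by
    rw [iterate_deriv_two_stmt18Poly]
    nlinarith [sq_nonneg (x ^ 2 - 6 * x), sq_nonneg (x - 2)]

/-- `stmt18Poly` has exactly two real roots `α₁, α₂`, with `α₁ < 0 < α₂ < 2`. -/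
theorem stmt18 :
    ∃ α₁ α₂ : ℝ, α₁ < 0 ∧ 0 < α₂ ∧ α₂ < 2 ∧
      (∀ t : ℝ, stmt18Poly t = 0 ↔ t = α₁ ∨ t = α₂) := by
  obtain ⟨α₁, ⟨-, hα₁⟩, hα₁0⟩ : (0 : ℝ) ∈ stmt18Poly '' Ioo (-1) 0 :=
    intermediate_value_Ioo' (by norm_num) continuous_stmt18Poly.continuousOn
      (by norm_num [stmt18Poly])
  obtain ⟨α₂, ⟨hα₂, hα₂'⟩, hα₂0⟩ : (0 : ℝ) ∈ stmt18Poly '' Ioo 0 1 :=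
    intermediate_value_Ioo (by norm_num) continuous_stmt18Poly.continuousOn
      (by norm_num [stmt18Poly])
  refine ⟨α₁, α₂, hα₁, hα₂, hα₂'.trans one_lt_two, fun t => ⟨fun ht => ?_, ?_⟩⟩
  · exact strictConvexOn_stmt18Poly.eq_or_eq_of_apply_eq_zero trivial trivial trivial
      (hα₁.trans hα₂) hα₁0 hα₂0 ht
  · rintro (rfl | rfl) <;> assumption
end
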